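/- (Sauer's Lemma bound) Let 𝒞 be a family of subsets of a set Θ with finite VC dimension 𝒱 > 2. Then for all integers n > 2𝒱, the n-th shatter coefficient satisfies s_n(𝒞) ≤ n^𝒱. -/
import Mathlib
open Nat

lemma aux_choose_mono_half {n : ℕ} : ∀ m, m ≤ n / 2 → ∀ k, k ≤ m → n.choose k ≤ n.choose m := by
  intro m
  induction m with
  | zero => intro _ k hk; simp [Nat.le_zero.mp hk]
  | succ m ih =>
    intro hm k hk
    rcases Nat.lt_succ_iff_lt_or_eq.mp (Nat.lt_succ_of_le hk) with h | rfl
    · exact (ih (by omega) k (by omega)).trans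
        (Nat.choose_le_succ_of_lt_half_left (by omega))
    · exact le_rfl

lemma aux_succ_le_factorial : ∀ V, 3 ≤ V → V + 1 ≤ V ! := by
  intro V h
  induction V with
  | zero => omega
  | succ m ih =>
    rcases Nat.lt_or_ge m 3 with hm | hm
    · have : m = 2 := by omega
      subst this; decide
    · have h1 := ih hm
      rw [Nat.factorial_succ]
      nlinarith

open Finset in
lemma aux_sum_choose_le {V n : ℕ} (hV : 2 < V) (hn : 2 * V < n) :
    ∑ k ∈ Iic V, n.choose k ≤ n ^ V := by
  have hhalf : V ≤ n / 2 := by omega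
  calc ∑ k ∈ Iic V, n.choose k
      ≤ ∑ _k ∈ Iic V, n.choose V :=
        Finset.sum_le_sum fun k hk => aux_choose_mono_half V hhalf k (mem_Iic.mp hk)
    _ = (V + 1) * n.choose V := by rw [Finset.sum_const, Nat.card_Iic, smul_eq_mul]
    _ ≤ V ! * n.choose V := Nat.mul_le_mul_right _ (aux_succ_le_factorial V (by omega))
    _ = n.descFactorial V := (Nat.descFactorial_eq_factorial_mul_choose n V).symm
    _ ≤ n ^ V := Nat.descFactorial_le_pow n V

/-- The set of traces cut out by the class `𝒞` on the tuple of points `θ`: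
each member of `𝒞` picks out the index set `{i | θ i ∈ C}`. -/
def traces {Θ : Type*} (𝒞 : Set (Set Θ)) {n : ℕ} (θ : Fin n → Θ) : Set (Set (Fin n)) :=
  {s | ∃ C ∈ 𝒞, s = {i | θ i ∈ C}}

/-- The `n`-th shatter coefficient of a class of sets: the maximal number of distinct
subsets of `n` points picked out by members of the class. -/
noncomputable def shatterCoeff {Θ : Type*} (𝒞 : Set (Set Θ)) (n : ℕ) : ℕ :=
  sSup {k : ℕ | ∃ θ : Fin n → Θ, k = (traces 𝒞 θ).ncard}

lemma aux_ncard_le {n : ℕ} (t : Set (Set (Fin n))) : t.ncard ≤ 2 ^ n := by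
  have h := Set.ncard_le_ncard (Set.subset_univ t) Set.finite_univ
  rwa [Set.ncard_univ, Nat.card_eq_fintype_card, Fintype.card_set, Fintype.card_fin] at h

lemma aux_shatterCoeff_le_two_pow {Θ : Type*} (𝒞 : Set (Set Θ)) (d : ℕ) :
    shatterCoeff 𝒞 d ≤ 2 ^ d := by
  refine csSup_le' ?_
  rintro k ⟨θ, rfl⟩
  exact aux_ncard_le _

lemma aux_traces_eq_univ {Θ : Type*} (𝒞 : Set (Set Θ)) {d : ℕ} (θ' : Fin d → Θ)
    (h : ∀ t : Set (Fin d), t ∈ traces 𝒞 θ') : shatterCoeff 𝒞 d = 2 ^ d := by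
  refine le_antisymm (aux_shatterCoeff_le_two_pow 𝒞 d) ?_
  have huniv : traces 𝒞 θ' = Set.univ := Set.eq_univ_of_forall h
  have hmem : (2 : ℕ) ^ d ∈ {k : ℕ | ∃ θ : Fin d → Θ, k = (traces 𝒞 θ).ncard} := by
    refine ⟨θ', ?_⟩
    rw [huniv, Set.ncard_univ, Nat.card_eq_fintype_card, Fintype.card_set, Fintype.card_fin]
  exact le_csSup ⟨2 ^ d, by rintro k ⟨θ, rfl⟩; exact aux_ncard_le _⟩ hmem

lemma aux_vcdim_le {Θ : Type*} (𝒞 : Set (Set Θ)) (V : ℕ)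
    (hV_max : ∀ d : ℕ, shatterCoeff 𝒞 d = 2 ^ d → d ≤ V)
    {n : ℕ} (θ : Fin n → Θ) (s : Finset (Fin n))
    (F : Finset (Finset (Fin n)))
    (hF : ∀ w ∈ F, ∃ C ∈ 𝒞, ∀ i : Fin n, i ∈ w ↔ θ i ∈ C)
    (hs : F.Shatters s) : s.card ≤ V := by
  classical
  set e : Fin s.card ≃ {x // x ∈ s} := s.equivFin.symm with he
  set θ' : Fin s.card → Θ := fun j => θ (e j : Fin n) with hθ'
  refine hV_max s.card (aux_traces_eq_univ 𝒞 θ' ?_)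
  intro t
  set u : Finset (Fin n) := t.toFinite.toFinset.image (fun j => ((e j : {x // x ∈ s}) : Fin n))
    with hu
  have hus : u ⊆ s := by
    intro x hx
    simp only [hu, Finset.mem_image, Set.Finite.mem_toFinset] at hx
    obtain ⟨j, _, rfl⟩ := hx
    exact (e j).2
  obtain ⟨w, hwF, hsw⟩ := hs hus
  obtain ⟨C, hC, hwC⟩ := hF w hwF
  refine ⟨C, hC, ?_⟩
  ext j
  have hmemu : j ∈ t ↔ (↑(e j) : Fin n) ∈ u := by
    simp only [hu, Finset.mem_image, Set.Finite.mem_toFinset]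
    constructor
    · exact fun h => ⟨j, h, rfl⟩
    · rintro ⟨j', hj', hjj⟩
      have : j' = j := e.injective (Subtype.ext hjj)
      exact this ▸ hj'
  have hjs : (↑(e j) : Fin n) ∈ s := (e j).2
  simp only [Set.mem_setOf_eq, hθ']
  rw [← hwC]
  constructor
  · intro hj
    have : (↑(e j) : Fin n) ∈ s ∩ w := hsw ▸ (hmemu.mp hj)
    exact (Finset.mem_inter.mp this).2
  · intro hj
    exact hmemu.mpr (hsw ▸ Finset.mem_inter.mpr ⟨hjs, hj⟩)

theorem stmt_12 {Θ : Type*} (𝒞 : Set (Set Θ)) (V : ℕ)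
    (hV_shatters : shatterCoeff 𝒞 V = 2 ^ V)
    (hV_max : ∀ d : ℕ, shatterCoeff 𝒞 d = 2 ^ d → d ≤ V)
    (hV2 : 2 < V) :
    ∀ n : ℕ, 2 * V < n → shatterCoeff 𝒞 n ≤ n ^ V := by
  classical
  intro n hn
  refine csSup_le' ?_
  rintro k ⟨θ, rfl⟩
  -- the trace family as a finset of finsets
  set F : Finset (Finset (Fin n)) :=
    (traces 𝒞 θ).toFinite.toFinset.image (fun s => s.toFinite.toFinset) with hFdef
  have hcard : (traces 𝒞 θ).ncard = F.card := by
    rw [Set.ncard_eq_toFinset_card _ (traces 𝒞 θ).toFinite, hFdef,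
      Finset.card_image_of_injOn]
    intro a _ b _ hab
    have := congrArg (fun (t : Finset (Fin n)) => (t : Set (Fin n))) hab
    simpa [Set.Finite.coe_toFinset] using this
  have hF : ∀ w ∈ F, ∃ C ∈ 𝒞, ∀ i : Fin n, i ∈ w ↔ θ i ∈ C := by
    intro w hw
    simp only [hFdef, Finset.mem_image, Set.Finite.mem_toFinset] at hw
    obtain ⟨tr, htr, rfl⟩ := hw
    obtain ⟨C, hC, rfl⟩ := htr
    exact ⟨C, hC, fun i => by simp [Set.Finite.mem_toFinset]⟩
  have hvc : F.vcDim ≤ V := by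
    refine Finset.sup_le ?_
    intro s hs
    exact aux_vcdim_le 𝒞 V hV_max θ s F hF (Finset.mem_shatterer.mp hs)
  calc (traces 𝒞 θ).ncard = F.card := hcard
    _ ≤ F.shatterer.card := Finset.card_le_card_shatterer F
    _ ≤ ∑ k ∈ Finset.Iic F.vcDim, (Fintype.card (Fin n)).choose k :=
        Finset.card_shatterer_le_sum_vcDim
    _ ≤ ∑ k ∈ Finset.Iic V, n.choose k := by
        rw [Fintype.card_fin]
        exact Finset.sum_le_sum_of_subset (Finset.Iic_subset_Iic.mpr hvc)
    _ ≤ n ^ V := aux_sum_choose_le hV2 hn
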